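/- Under hypotheses (i)–(vi), there exist a constant c7 > 0 and an integer N such that for all n ≥ N, E[max{X_{mn}, X_{mn+1}, …, X_{mn+m−1}}] > c7·n. -/

import Mathlib

/-!
Write `p n = P(A n)`. Integrating (v) and (vi) shows that `E f` drops by `c4` per step, except
that each unit of `p` costs up to `c3 + c4`; since `f` is bounded below, `∑_{k<n} p k` grows at
least linearly. As `X` is a submartingale, (iii) gives `E X (n + m) ≥ E X n + c1 p n`, so the
block sums `∑_{j<m} E X (K + j)` grow by at least `c1 p K` from `K` to `K + 1`. Finally the
expected maximum over a block of length `m` dominates the block average.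
-/

open MeasureTheory Filter

section Sequences

lemma sum_range_add_succ_eq (e : ℕ → ℝ) (m K : ℕ) :
    ∑ j ∈ Finset.range m, e (K + 1 + j) =
      ∑ j ∈ Finset.range m, e (K + j) + (e (K + m) - e K) := by
  have hshift := Finset.sum_range_succ' (fun j => e (K + j)) m
  rw [Finset.sum_range_succ] at hshift
  simp only [← add_assoc, add_right_comm K _ 1, add_zero] at hshift
  linarith

lemma sum_range_add_ge_of_le_add_mul {e p : ℕ → ℝ} {c : ℝ} {m : ℕ}
    (he : ∀ n, e n + c * p n ≤ e (n + m)) (K : ℕ) :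
    ∑ j ∈ Finset.range m, e j + c * ∑ k ∈ Finset.range K, p k ≤
      ∑ j ∈ Finset.range m, e (K + j) := by
  induction K with
  | zero => simp
  | succ K ih =>
    rw [sum_range_add_succ_eq, Finset.sum_range_succ, mul_add]
    linarith [he K]

lemma mul_sub_le_mul_sum_range_of_le_add {F p : ℕ → ℝ} {a b L : ℝ}
    (hF : ∀ n, F (n + 1) ≤ F n + a * p n - b * (1 - p n)) (hL : ∀ n, L ≤ F n) (n : ℕ) :
    b * n - (F 0 - L) ≤ (a + b) * ∑ k ∈ Finset.range n, p k := by
  suffices h : F n ≤ F 0 + (a + b) * ∑ k ∈ Finset.range n, p k - b * n by linarith [hL n]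
  induction n with
  | zero => simp
  | succ n ih =>
    rw [Finset.sum_range_succ]
    push_cast
    linarith [hF n]

lemma exists_pos_mul_lt_of_affine_le {g : ℕ → ℝ} {a b D : ℝ} (ha : 0 < a) (hb : 0 < b)
    (h : ∀ n, a * n + D ≤ b * g n) :
    ∃ c : ℝ, 0 < c ∧ ∃ N : ℕ, ∀ n ≥ N, c * n < g n := by
  have hev : ∀ᶠ n : ℕ in atTop, 0 < a / 2 * n + D :=
    ((tendsto_natCast_atTop_atTop.const_mul_atTop (half_pos ha)).atTop_add
      tendsto_const_nhds).eventually_gt_atTop 0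
  obtain ⟨N, hN⟩ := eventually_atTop.1 hev
  refine ⟨a / (2 * b), by positivity, N, fun n hn => ?_⟩
  rw [div_mul_eq_mul_div, div_lt_iff₀ (by positivity)]
  linarith [hN n hn, h n]

end Sequences

section Integrals

variable {Ω ι : Type*} {m m0 : MeasurableSpace Ω} {μ : Measure Ω}

lemma integrable_finset_sup' {s : Finset ι} (hs : s.Nonempty) {g : ι → Ω → ℝ}
    (hg : ∀ i ∈ s, Integrable (g i) μ) :
    Integrable (fun ω => s.sup' hs fun i => g i ω) μ := by
  simp_rw [← Finset.sup'_apply]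
  exact Finset.sup'_induction (p := (Integrable · μ)) hs g (fun _ h₁ _ h₂ => h₁.sup h₂) hg

lemma sum_integral_le_card_mul_integral_sup' {s : Finset ι} (hs : s.Nonempty)
    {g : ι → Ω → ℝ} (hg : ∀ i ∈ s, Integrable (g i) μ) :
    ∑ i ∈ s, ∫ ω, g i ω ∂μ ≤ s.card * ∫ ω, s.sup' hs (fun i => g i ω) ∂μ := by
  rw [← nsmul_eq_mul, ← Finset.sum_const]
  exact Finset.sum_le_sum fun i hi =>
    integral_mono (hg i hi) (integrable_finset_sup' hs hg) fun ω => Finset.le_sup' (g · ω) hi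

lemma mul_measureReal_le_setIntegral_of_ae [IsFiniteMeasure μ] {f : Ω → ℝ} {s : Set Ω}
    {c : ℝ} (hs : MeasurableSet s) (hf : IntegrableOn f s μ)
    (h : ∀ᵐ ω ∂μ, ω ∈ s → c ≤ f ω) : c * μ.real s ≤ ∫ ω in s, f ω ∂μ := by
  rw [mul_comm, ← smul_eq_mul, ← setIntegral_const]
  exact setIntegral_mono_on_ae integrableOn_const hf hs h

lemma setIntegral_le_mul_measureReal_of_ae [IsFiniteMeasure μ] {f : Ω → ℝ} {s : Set Ω}
    {c : ℝ} (hs : MeasurableSet s) (hf : IntegrableOn f s μ)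
    (h : ∀ᵐ ω ∂μ, ω ∈ s → f ω ≤ c) : ∫ ω in s, f ω ∂μ ≤ c * μ.real s := by
  rw [mul_comm, ← smul_eq_mul, ← setIntegral_const]
  exact setIntegral_mono_on_ae hf integrableOn_const hs h

lemma mul_measureReal_le_setIntegral_of_ae_le_condExp [IsFiniteMeasure μ] (hm : m ≤ m0)
    {g : Ω → ℝ} (hg : Integrable g μ) {s : Set Ω} (hs : MeasurableSet[m] s) {c : ℝ}
    (h : ∀ᵐ ω ∂μ, ω ∈ s → c ≤ μ[g | m] ω) :
    c * μ.real s ≤ ∫ ω in s, g ω ∂μ := by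
  rw [← setIntegral_condExp hm hg hs]
  exact mul_measureReal_le_setIntegral_of_ae (hm s hs) integrable_condExp.integrableOn h

lemma setIntegral_le_mul_measureReal_of_condExp_le [IsFiniteMeasure μ] (hm : m ≤ m0)
    {g : Ω → ℝ} (hg : Integrable g μ) {s : Set Ω} (hs : MeasurableSet[m] s) {c : ℝ}
    (h : ∀ᵐ ω ∂μ, ω ∈ s → μ[g | m] ω ≤ c) :
    ∫ ω in s, g ω ∂μ ≤ c * μ.real s := by
  rw [← setIntegral_condExp hm hg hs]
  exact setIntegral_le_mul_measureReal_of_ae (hm s hs) integrable_condExp.integrableOn h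

lemma MeasureTheory.Submartingale.integral_add_mul_measureReal_le [IsFiniteMeasure μ]
    [Preorder ι] {ℱ : Filtration ι m0} {X : ι → Ω → ℝ} (hX : Submartingale X ℱ μ)
    {i j : ι} (hij : i ≤ j) {s : Set Ω} (hs : MeasurableSet[ℱ i] s) {c : ℝ}
    (h : ∀ᵐ ω ∂μ, ω ∈ s → c ≤ μ[X j - X i | ℱ i] ω) :
    ∫ ω, X i ω ∂μ + c * μ.real s ≤ ∫ ω, X j ω ∂μ := by
  have hon := mul_measureReal_le_setIntegral_of_ae_le_condExp (ℱ.le i)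
    ((hX.integrable j).sub (hX.integrable i)) hs h
  rw [integral_sub' (hX.integrable j).integrableOn (hX.integrable i).integrableOn] at hon
  have hoff := hX.setIntegral_le hij hs.compl
  rw [← integral_add_compl (ℱ.le i s hs) (hX.integrable i),
    ← integral_add_compl (ℱ.le i s hs) (hX.integrable j)]
  linarith

lemma integral_le_integral_add_of_increment_le [IsProbabilityMeasure μ] (hm : m ≤ m0)
    {u v : Ω → ℝ} (hu : Integrable u μ) (hv : Integrable v μ) {s : Set Ω}
    (hs : MeasurableSet[m] s) {a b : ℝ} (hon : ∀ᵐ ω ∂μ, ω ∈ s → v ω - u ω ≤ a)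
    (hoff : ∀ᵐ ω ∂μ, ω ∉ s → μ[v - u | m] ω ≤ -b) :
    ∫ ω, v ω ∂μ ≤ ∫ ω, u ω ∂μ + a * μ.real s - b * (1 - μ.real s) := by
  have hon' := setIntegral_le_mul_measureReal_of_ae (hm s hs) (hv.sub hu).integrableOn hon
  have hoff' := setIntegral_le_mul_measureReal_of_condExp_le hm (hv.sub hu) hs.compl hoff
  rw [probReal_compl_eq_one_sub (hm s hs)] at hoff'
  have hsplit := integral_add_compl (hm s hs) (hv.sub hu)
  rw [integral_sub' hv hu] at hsplit
  linarith

end Integrals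

theorem expected_max_lower_bound_general {Ω : Type*} {m0 : MeasurableSpace Ω} {μ : Measure Ω}
    [IsProbabilityMeasure μ] (ℱ : Filtration ℕ m0)
    (X f : ℕ → Ω → ℝ) (A : ℕ → Set Ω)
    (hXadp : ∀ n, StronglyMeasurable[ℱ n] (X n))
    (hAmeas : ∀ n, MeasurableSet[ℱ n] (A n))
    (hXint : ∀ n, Integrable (X n) μ)
    (hfint : ∀ n, Integrable (f n) μ)
    (c1 c2 c3 c4 : ℝ) (hc1 : 0 < c1) (hc3 : 0 < c3) (hc4 : 0 < c4)
    (m : ℕ) (hm : 0 < m)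
    (h2 : ∀ n, 0 ≤ᵐ[μ] μ[fun ω => X (n + 1) ω - X n ω | ℱ n])
    (h3 : ∀ n, ∀ᵐ ω ∂μ, ω ∈ A n →
      c1 < (μ[fun ω => X (n + m) ω - X n ω | ℱ n]) ω)
    (h4 : ∀ n, ∀ᵐ ω ∂μ, -c2 < f n ω)
    (h5 : ∀ n, ∀ᵐ ω ∂μ,
      (f (n + 1) ω - f n ω) * (A n).indicator (fun _ => (1 : ℝ)) ω < c3)
    (h6 : ∀ n, ∀ᵐ ω ∂μ, ω ∉ A n →
      (μ[fun ω => f (n + 1) ω - f n ω | ℱ n]) ω < -c4) :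
    ∃ c7 : ℝ, 0 < c7 ∧ ∃ N : ℕ, ∀ n ≥ N,
      c7 * (n : ℝ) <
        ∫ ω, ((Finset.range m).sup' (Finset.nonempty_range_iff.mpr hm.ne')
          fun j => X (m * n + j) ω) ∂μ := by
  set S : ℕ → ℝ := fun n => ∑ k ∈ Finset.range n, μ.real (A k)
  have hX : Submartingale X ℱ μ := submartingale_of_condExp_sub_nonneg_nat hXadp hXint h2
  have hf_drift (n : ℕ) : ∫ ω, f (n + 1) ω ∂μ ≤
      ∫ ω, f n ω ∂μ + c3 * μ.real (A n) - c4 * (1 - μ.real (A n)) := by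
    refine integral_le_integral_add_of_increment_le (ℱ.le n) (hfint n) (hfint (n + 1))
      (hAmeas n) ?_ ((h6 n).mono fun ω h hω => (h hω).le)
    filter_upwards [h5 n] with ω h hω
    simpa [Set.indicator_of_mem hω] using h.le
  have hf_lower (n : ℕ) : -c2 ≤ ∫ ω, f n ω ∂μ := by
    simpa using
      integral_mono_ae (integrable_const (-c2)) (hfint n) ((h4 n).mono fun _ h => h.le)
  have hS (n : ℕ) : c4 * n - (∫ ω, f 0 ω ∂μ - -c2) ≤ (c3 + c4) * S n :=
    mul_sub_le_mul_sum_range_of_le_add hf_drift hf_lower n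
  have hX_block (K : ℕ) : ∑ j ∈ Finset.range m, ∫ ω, X j ω ∂μ + c1 * S K ≤
      ∑ j ∈ Finset.range m, ∫ ω, X (K + j) ω ∂μ :=
    sum_range_add_ge_of_le_add_mul (fun n => hX.integral_add_mul_measureReal_le
      (Nat.le_add_right n m) (hAmeas n) ((h3 n).mono fun ω h hω => (h hω).le)) K
  have hmax (n : ℕ) := sum_integral_le_card_mul_integral_sup'
    (Finset.nonempty_range_iff.mpr hm.ne') fun j _ => hXint (m * n + j)
  rw [Finset.card_range] at hmax
  -- the constants come from adding `c3 + c4` times the block bound to `c1` times `hS (m * n)`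
  refine exists_pos_mul_lt_of_affine_le (a := c1 * c4 * m) (b := (c3 + c4) * m)
    (D := (c3 + c4) * ∑ j ∈ Finset.range m, ∫ ω, X j ω ∂μ -
      c1 * (∫ ω, f 0 ω ∂μ + c2))
    (by positivity) (by positivity) fun n => ?_
  have hblock := mul_le_mul_of_nonneg_left ((hX_block (m * n)).trans (hmax n))
    (by positivity : 0 ≤ c3 + c4)
  have hfreq := mul_le_mul_of_nonneg_left (hS (m * n)) hc1.le
  push_cast at hblock hfreq
  linarith

/-- Under hypotheses (i)–(vi), there exist `c7 > 0` and an integer `N` such that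
for all `n ≥ N`, `E[max { X_{m n}, …, X_{m n + m - 1} }] > c7 * n`. -/
theorem expected_max_lower_bound {Ω : Type*} {m0 : MeasurableSpace Ω} {μ : Measure Ω}
    [IsProbabilityMeasure μ] (ℱ : Filtration ℕ m0)
    (hF0 : ∀ s : Set Ω, MeasurableSet[ℱ 0] s → μ s = 0 ∨ μ s = 1)
    (X f : ℕ → Ω → ℝ) (A : ℕ → Set Ω)
    (hXadp : ∀ n, StronglyMeasurable[ℱ n] (X n))
    (hfadp : ∀ n, StronglyMeasurable[ℱ n] (f n))
    (hAmeas : ∀ n, MeasurableSet[ℱ n] (A n))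
    (hXint : ∀ n, Integrable (X n) μ)
    (hfint : ∀ n, Integrable (f n) μ)
    (c1 c2 c3 c4 : ℝ) (hc1 : 0 < c1) (hc2 : 0 < c2) (hc3 : 0 < c3) (hc4 : 0 < c4)
    (m : ℕ) (hm : 0 < m)
    (h1 : ∀ n, ∀ᵐ ω ∂μ, |X (n + 1) ω - X n ω| ≤ 1)
    (h2 : ∀ n, 0 ≤ᵐ[μ] μ[fun ω => X (n + 1) ω - X n ω | ℱ n])
    (h3 : ∀ n, ∀ᵐ ω ∂μ, ω ∈ A n →
      c1 < (μ[fun ω => X (n + m) ω - X n ω | ℱ n]) ω)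
    (h4 : ∀ n, ∀ᵐ ω ∂μ, -c2 < f n ω)
    (h5 : ∀ n, ∀ᵐ ω ∂μ,
      (f (n + 1) ω - f n ω) * (A n).indicator (fun _ => (1 : ℝ)) ω < c3)
    (h6 : ∀ n, ∀ᵐ ω ∂μ, ω ∉ A n →
      (μ[fun ω => f (n + 1) ω - f n ω | ℱ n]) ω < -c4) :
    ∃ c7 : ℝ, 0 < c7 ∧ ∃ N : ℕ, ∀ n ≥ N,
      c7 * (n : ℝ) <
        ∫ ω, ((Finset.range m).sup' (Finset.nonempty_range_iff.mpr hm.ne')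
          fun j => X (m * n + j) ω) ∂μ :=
  expected_max_lower_bound_general ℱ X f A hXadp hAmeas hXint hfint c1 c2 c3 c4 hc1 hc3 hc4 m hm h2
    h3 h4 h5 h6
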